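/- arXiv:1409.8510 — 2 statements merged into one kernel-verified Lean document; each statement's English description precedes it below -/
import Mathlib

section
/- Let f, g₁, g₂ be polynomials with integer coefficients such that f(0) ≠ 0, and suppose f(x)^n = g₁(x^k)/g₂(x^k) as rational functions for some positive integers n and k. Then there exists a polynomial h with integer coefficients such that f(x) = h(x^k). -/
/-!
Let `ζ` be a primitive `k`-th root of unity in `ℂ`. Substituting `ζ x` for `x` fixes `g₁(x^k)` and
`g₂(x^k)`, so `f(ζ x)^n = f(x)^n`. Since `ℂ[X]` is integrally closed, `f(ζ x)` and `f(x)` are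
associated, i.e. differ by a constant factor, which is `1` because `f(0) ≠ 0`. Comparing
coefficients in `f(ζ x) = f(x)` gives `ζ^i a_i = a_i`, so `a_i = 0` unless `k ∣ i`.
-/

open Polynomial

namespace Polynomial

variable {R : Type*} [CommRing R]

theorem expand_contract_of_coeff_eq_zero {k : ℕ} (hk : k ≠ 0) {f : R[X]}
    (hf : ∀ i, ¬ k ∣ i → f.coeff i = 0) : expand R k (contract k f) = f := by
  ext i
  rw [coeff_expand hk.bot_lt, coeff_contract hk]
  split_ifs with h
  · rw [Nat.div_mul_cancel h]
  · exact (hf i h).symm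

theorem comp_X_pow_comp_C_mul_X {k : ℕ} {ζ : R} (hζ : ζ ^ k = 1) (g : R[X]) :
    (g.comp (X ^ k)).comp (C ζ * X) = g.comp (X ^ k) := by
  rw [comp_assoc, pow_comp, X_comp, mul_pow, ← C_pow, hζ, C_1, one_mul]

variable [IsDomain R]

theorem expand_contract_of_comp_C_mul_X_eq {k : ℕ} (hk : k ≠ 0) {ζ : R}
    (hζ : IsPrimitiveRoot ζ k) {f : R[X]} (hf : f.comp (C ζ * X) = f) :
    expand R k (contract k f) = f := by
  refine expand_contract_of_coeff_eq_zero hk fun i hi => ?_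
  have : f.coeff i * (ζ ^ i - 1) = 0 := by
    rw [mul_sub_one, ← comp_C_mul_X_coeff, hf, sub_self]
  exact (mul_eq_zero.1 this).resolve_right
    (sub_ne_zero.2 fun h => hi ((hζ.pow_eq_one_iff_dvd i).1 h))

theorem eq_of_pow_eq_pow_of_eval_zero_eq [IsIntegrallyClosed R[X]] {n : ℕ} (hn : n ≠ 0)
    {p q : R[X]} (hpq : p ^ n = q ^ n) (h0 : p.eval 0 = q.eval 0) (hq0 : q.eval 0 ≠ 0) :
    p = q := by
  obtain ⟨u, rfl⟩ : Associated p q := (Associated.pow_iff hn).1 (by rw [hpq])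
  obtain ⟨r, -, hr⟩ := isUnit_iff.1 u.isUnit
  have hr1 : r = 1 := by
    rw [eval_mul, ← hr, eval_C] at h0 hq0
    exact mul_left_cancel₀ (left_ne_zero_of_mul hq0) (by rw [mul_one, ← h0])
  rw [← hr, hr1, C_1, mul_one]

theorem comp_C_mul_X_eq_of_pow_mul_comp_X_pow_eq [IsIntegrallyClosed R[X]] {k n : ℕ}
    (hk : k ≠ 0) (hn : n ≠ 0) {ζ : R} (hζ : ζ ^ k = 1) {f g₁ g₂ : R[X]}
    (hf0 : f.eval 0 ≠ 0) (hg₂ : g₂ ≠ 0) (heq : f ^ n * g₂.comp (X ^ k) = g₁.comp (X ^ k)) :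
    f.comp (C ζ * X) = f := by
  have hg₂k : g₂.comp (X ^ k) ≠ 0 := by
    rwa [← expand_eq_comp_X_pow, expand_ne_zero hk.bot_lt]
  refine eq_of_pow_eq_pow_of_eval_zero_eq hn (mul_right_cancel₀ hg₂k ?_) (by simp) hf0
  have := congrArg (·.comp (C ζ * X)) heq
  simp only [mul_comp, pow_comp, comp_X_pow_comp_C_mul_X hζ] at this
  exact this.trans heq.symm

end Polynomial

theorem stmt_0 (f g₁ g₂ : Polynomial ℤ) (n k : ℕ) (hn : 0 < n) (hk : 0 < k)
    (hf0 : f.eval 0 ≠ 0) (hg₂ : g₂ ≠ 0)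
    (heq : f ^ n * g₂.comp (X ^ k) = g₁.comp (X ^ k)) :
    ∃ h : Polynomial ℤ, f = h.comp (X ^ k) := by
  let ι : ℤ →+* ℂ := Int.castRingHom ℂ
  have hι : Function.Injective ι := Int.cast_injective
  obtain ⟨ζ, hζ⟩ : ∃ ζ : ℂ, IsPrimitiveRoot ζ k := ⟨_, Complex.isPrimitiveRoot_exp k hk.ne'⟩
  have heqℂ : f.map ι ^ n * (g₂.map ι).comp (X ^ k) = (g₁.map ι).comp (X ^ k) := by
    simpa [Polynomial.map_comp] using congrArg (map ι) heq
  have hfζ : (f.map ι).comp (C ζ * X) = f.map ι :=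
    comp_C_mul_X_eq_of_pow_mul_comp_X_pow_eq hk.ne' hn.ne' hζ.pow_eq_one
      (by rwa [eval_zero_map, map_ne_zero_iff _ hι]) ((Polynomial.map_ne_zero_iff hι).2 hg₂) heqℂ
  refine ⟨contract k f, ?_⟩
  rw [← expand_eq_comp_X_pow]
  apply map_injective ι hι
  rw [map_expand, map_contract hk.ne', expand_contract_of_comp_C_mul_X_eq hk.ne' hζ hfζ]
end

section
/- Let α₁,…,α_r and β₁,…,β_s be nonzero complex numbers, and let k be a positive integer such that Σᵢ αᵢ^m = Σⱼ βⱼ^m for every positive integer m not divisible by k. Then, setting L_C(t) = Πᵢ(1 − αᵢt), L_D(t) = Πⱼ(1 − βⱼt), L_C^{(k)}(t) = Πᵢ(1 − αᵢ^k t), L_D^{(k)}(t) = Πⱼ(1 − βⱼ^k t), one has the polynomial identity L_C(t)^k · L_D^{(k)}(t^k) = L_D(t)^k · L_C^{(k)}(t^k). -/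
/-!
A power series with nonzero constant term is determined, in characteristic zero, by that constant
term and its logarithmic derivative. Since `X · (log (1 - a Xᵏ))' = k (1 - (1 - a Xᵏ)⁻¹)` and
`(1 - bᵏ Xᵏ)⁻¹ = ∑ₘ bᵏᵐ Xᵏᵐ`, the coefficient of `Xⁿ` in `X · (log F)'` for
`F = L_C(X)ᵏ L_D^{(k)}(Xᵏ)` is `-k (∑ αᵢⁿ + [k ∣ n] ∑ βⱼⁿ)` when `n > 0`. Swapping the roles of
`α` and `β` leaves this unchanged exactly because the power sums agree whenever `k ∤ n`.
-/

open Polynomial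

namespace PowerSeries

variable {K : Type*} [Field K]

-- Only meaningful when `constantCoeff f ≠ 0`; otherwise `f⁻¹ = 0`.
noncomputable def logDeriv (f : K⟦X⟧) : K⟦X⟧ := d⁄dX K f * f⁻¹

theorem derivative_eq_logDeriv_mul {f : K⟦X⟧} (hf : constantCoeff f ≠ 0) :
    d⁄dX K f = logDeriv f * f := by
  rw [logDeriv, mul_assoc, PowerSeries.inv_mul_cancel f hf, mul_one]

theorem logDeriv_mul {f g : K⟦X⟧} (hf : constantCoeff f ≠ 0) (hg : constantCoeff g ≠ 0) :
    logDeriv (f * g) = logDeriv f + logDeriv g := by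
  simp only [logDeriv, Derivation.leibniz, PowerSeries.mul_inv_rev, smul_eq_mul]
  linear_combination (d⁄dX K g * g⁻¹) * PowerSeries.mul_inv_cancel f hf +
    (d⁄dX K f * f⁻¹) * PowerSeries.mul_inv_cancel g hg

theorem logDeriv_pow {f : K⟦X⟧} (hf : constantCoeff f ≠ 0) (n : ℕ) :
    logDeriv (f ^ n) = n • logDeriv f := by
  induction n with
  | zero => simp [logDeriv]
  | succ n ih => rw [pow_succ, logDeriv_mul (by simpa using pow_ne_zero n hf) hf, ih, succ_nsmul]

theorem logDeriv_prod {ι : Type*} (s : Finset ι) (f : ι → K⟦X⟧)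
    (hf : ∀ i ∈ s, constantCoeff (f i) ≠ 0) :
    logDeriv (∏ i ∈ s, f i) = ∑ i ∈ s, logDeriv (f i) := by
  induction s using Finset.cons_induction with
  | empty => simp [logDeriv]
  | cons a s ha ih =>
    rw [Finset.forall_mem_cons] at hf
    rw [Finset.prod_cons, Finset.sum_cons, ← ih hf.2,
      logDeriv_mul hf.1 (by simpa [map_prod, Finset.prod_eq_zero_iff] using hf.2)]

theorem eq_of_logDeriv_eq [CharZero K] {f g : K⟦X⟧} (hf : constantCoeff f ≠ 0)
    (h₀ : constantCoeff f = constantCoeff g) (h : logDeriv f = logDeriv g) : f = g := by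
  have hg : constantCoeff g ≠ 0 := h₀ ▸ hf
  have hquot : f * g⁻¹ = 1 := by
    apply derivative.ext
    · rw [Derivation.leibniz, derivative_inv', smul_eq_mul, smul_eq_mul,
        derivative_eq_logDeriv_mul hf, derivative_eq_logDeriv_mul hg, h, Derivation.map_one_eq_zero]
      linear_combination (-(logDeriv g * f * g⁻¹)) * PowerSeries.mul_inv_cancel g hg
    · simp [h₀, hg]
  calc f = f * g⁻¹ * g := by rw [mul_assoc, PowerSeries.inv_mul_cancel g hg, mul_one]
    _ = g := by rw [hquot, one_mul]

theorem inv_one_sub_C_mul_X (a : K) : (1 - C a * X)⁻¹ = mk (a ^ ·) := by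
  have hgeom : mk (a ^ ·) = rescale a (mk 1) := by simp [rescale_mk]
  rw [inv_eq_iff_mul_eq_one (by simp), hgeom, ← rescale_X, ← map_one (rescale a), ← map_sub,
    ← map_mul, mk_one_mul_one_sub_eq_one, map_one]

theorem inv_one_sub_C_mul_X_pow (a : K) {k : ℕ} (hk : k ≠ 0) :
    (1 - C a * X ^ k)⁻¹ = expand k hk (1 - C a * X)⁻¹ := by
  have hexpand : expand k hk (1 - C a * X) = 1 - C a * X ^ k := by simp [expand_C]
  rw [inv_eq_iff_mul_eq_one (by simp [hk]), ← hexpand, ← map_mul,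
    PowerSeries.inv_mul_cancel _ (by simp), map_one]

theorem coeff_inv_one_sub_C_pow_mul_X_pow (b : K) {k : ℕ} (hk : k ≠ 0) (n : ℕ) :
    coeff n (1 - C (b ^ k) * X ^ k)⁻¹ = if k ∣ n then b ^ n else 0 := by
  rw [inv_one_sub_C_mul_X_pow _ hk, coeff_expand, inv_one_sub_C_mul_X, coeff_mk]
  split_ifs with hdvd
  · rw [← pow_mul, Nat.mul_div_cancel' hdvd]
  · rfl

theorem X_mul_logDeriv_one_sub_C_mul_X_pow (a : K) {k : ℕ} (hk : k ≠ 0) :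
    X * logDeriv (1 - C a * X ^ k) = k • (1 - (1 - C a * X ^ k)⁻¹) := by
  have hX : X * d⁄dX K (1 - C a * X ^ k) = k • (1 - C a * X ^ k - 1) := by
    obtain ⟨j, rfl⟩ := Nat.exists_eq_add_one_of_ne_zero hk
    simp only [map_sub, Derivation.map_one_eq_zero, Derivation.leibniz, Derivation.leibniz_pow,
      derivative_C, derivative_X, smul_eq_mul, nsmul_eq_mul, add_tsub_cancel_right]
    ring
  rw [logDeriv, ← mul_assoc, hX, smul_mul_assoc, sub_mul,
    PowerSeries.mul_inv_cancel _ (by simp [hk]), one_mul]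

theorem X_mul_logDeriv_prod_pow_mul_prod {ι κ : Type*} [Fintype ι] [Fintype κ] (α : ι → K)
    (β : κ → K) {k : ℕ} (hk : k ≠ 0) :
    X * logDeriv ((∏ i, (1 - C (α i) * X)) ^ k * ∏ j, (1 - C (β j ^ k) * X ^ k)) =
      k • ((Fintype.card ι + Fintype.card κ : K⟦X⟧) -
        (∑ i, (1 - C (α i) * X)⁻¹ + ∑ j, (1 - C (β j ^ k) * X ^ k)⁻¹)) := by
  have hlin (a : K) : X * logDeriv (1 - C a * X) = 1 - (1 - C a * X)⁻¹ := by
    simpa using X_mul_logDeriv_one_sub_C_mul_X_pow a one_ne_zero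
  rw [logDeriv_mul (by simp) (by simp [hk]), logDeriv_pow (by simp),
    logDeriv_prod _ _ (by simp), logDeriv_prod _ _ (by simp [hk]), mul_add, mul_smul_comm,
    Finset.mul_sum, Finset.mul_sum]
  simp only [hlin, X_mul_logDeriv_one_sub_C_mul_X_pow _ hk, ← Finset.smul_sum]
  simp only [Finset.sum_sub_distrib, Finset.sum_const, Finset.card_univ, nsmul_eq_mul, mul_one]
  ring

theorem prod_one_sub_C_mul_X_pow_mul_prod_eq_of_sum_pow_eq [CharZero K] {ι κ : Type*}
    [Fintype ι] [Fintype κ] (α : ι → K) (β : κ → K) {k : ℕ} (hk : k ≠ 0)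
    (hsum : ∀ m : ℕ, 0 < m → ¬ k ∣ m → ∑ i, α i ^ m = ∑ j, β j ^ m) :
    (∏ i, (1 - C (α i) * X)) ^ k * ∏ j, (1 - C (β j ^ k) * X ^ k) =
      (∏ j, (1 - C (β j) * X)) ^ k * ∏ i, (1 - C (α i ^ k) * X ^ k) := by
  have hinv_sums : ∑ i, (1 - C (α i) * X)⁻¹ + ∑ j, (1 - C (β j ^ k) * X ^ k)⁻¹ =
      ∑ j, (1 - C (β j) * X)⁻¹ + ∑ i, (1 - C (α i ^ k) * X ^ k)⁻¹ := by
    ext n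
    simp only [map_add, map_sum, inv_one_sub_C_mul_X, coeff_mk,
      coeff_inv_one_sub_C_pow_mul_X_pow _ hk]
    by_cases hdvd : k ∣ n
    · simp only [if_pos hdvd, add_comm]
    · simp only [if_neg hdvd, Finset.sum_const_zero, add_zero]
      exact hsum n (Nat.pos_of_ne_zero (by rintro rfl; exact hdvd (dvd_zero k))) hdvd
  refine eq_of_logDeriv_eq (by simp [hk]) (by simp [hk]) (X_mul_cancel ?_)
  rw [X_mul_logDeriv_prod_pow_mul_prod _ _ hk, X_mul_logDeriv_prod_pow_mul_prod _ _ hk, hinv_sums,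
    add_comm (Fintype.card ι : K⟦X⟧)]

end PowerSeries

theorem stmt_4_general (r s : ℕ) (α : Fin r → ℂ) (β : Fin s → ℂ)
    (k : ℕ) (hk : 0 < k)
    (hsum : ∀ m : ℕ, 0 < m → ¬ k ∣ m → ∑ i, α i ^ m = ∑ j, β j ^ m) :
    (∏ i, (1 - C (α i) * X)) ^ k * ∏ j, (1 - C (β j ^ k) * X ^ k) =
      (∏ j, (1 - C (β j) * X)) ^ k * ∏ i, (1 - C (α i ^ k) * X ^ k) := by
  apply Polynomial.coe_injective
  simp only [← coeToPowerSeries.ringHom_apply, map_mul, map_pow, map_prod, map_sub, map_one]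
  simpa [coeToPowerSeries.ringHom_apply] using
    PowerSeries.prod_one_sub_C_mul_X_pow_mul_prod_eq_of_sum_pow_eq α β hk.ne' hsum

theorem stmt_4 (r s : ℕ) (α : Fin r → ℂ) (β : Fin s → ℂ)
    (hα : ∀ i, α i ≠ 0) (hβ : ∀ j, β j ≠ 0) (k : ℕ) (hk : 0 < k)
    (hsum : ∀ m : ℕ, 0 < m → ¬ k ∣ m → ∑ i, α i ^ m = ∑ j, β j ^ m) :
    (∏ i, (1 - C (α i) * X)) ^ k * ∏ j, (1 - C (β j ^ k) * X ^ k) =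
      (∏ j, (1 - C (β j) * X)) ^ k * ∏ i, (1 - C (α i ^ k) * X ^ k) :=
  stmt_4_general r s α β k hk hsum
end
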